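/- arXiv:1712.03310 — 2 statements merged into one kernel-verified Lean document; each statement's English description precedes it below -/
import Mathlib

section
/- Let P_U ∈ ℝ^{m₁×m₁} and P_V ∈ ℝ^{m₂×m₂} be orthogonal projection matrices, let 1 ≤ R, and let R_i, R_j ∈ ℝ^{m₁×R} and S_i, S_j ∈ ℝ^{m₂×R} be R-frames. Define masks A_i = R^{-1/2} R_i S_iᵀ and A_j = R^{-1/2} R_j S_jᵀ. Then |⟨P_U A_i P_V, P_U A_j P_V⟩_F| ≤ (1/2) { ‖(P_U R_i)ᵀ(P_U R_j)‖₂² + ‖(P_V S_i)ᵀ(P_V S_j)‖₂² }. -/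
/-!
Factor `P_U A P_V = R^{-1/2} (P_U R)(P_V S)ᵀ` and cycle the trace: the inner
product becomes `R⁻¹ ⟨Y, X⟩_F` with `X = (P_U R_i)ᵀ(P_U R_j)` and `Y = (P_V S_i)ᵀ(P_V S_j)`,
both `R × R`. By Cauchy–Schwarz and `‖M‖_F² ≤ R ‖M‖₂²` (each column has norm at most `‖M‖₂`),
this is at most `‖X‖₂ ‖Y‖₂ ≤ (‖X‖₂² + ‖Y‖₂²) / 2`.
-/

open Matrix

/-- The spectral norm (largest singular value) of a real matrix, i.e. the operator norm
of the induced linear map between Euclidean spaces. -/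
noncomputable def specNorm {a b : ℕ} (M : Matrix (Fin a) (Fin b) ℝ) : ℝ :=
  ‖LinearMap.toContinuousLinearMap (Matrix.toEuclideanLin M)‖

lemma specNorm_nonneg {a b : ℕ} (M : Matrix (Fin a) (Fin b) ℝ) : 0 ≤ specNorm M :=
  norm_nonneg _

lemma sum_sq_apply_le_specNorm_sq {a b : ℕ} (M : Matrix (Fin a) (Fin b) ℝ) (k : Fin b) :
    ∑ i, M i k ^ 2 ≤ specNorm M ^ 2 := by
  set L := LinearMap.toContinuousLinearMap (Matrix.toEuclideanLin M)
  have hcol : ‖L (EuclideanSpace.single k 1)‖ ^ 2 = ∑ i, M i k ^ 2 := by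
    rw [EuclideanSpace.norm_sq_eq]
    simp [L, Matrix.toLpLin_apply, Matrix.mulVec_single]
  have hle : ‖L (EuclideanSpace.single k 1)‖ ≤ ‖L‖ := by
    simpa using L.le_opNorm (EuclideanSpace.single k 1)
  rw [← hcol]
  exact pow_le_pow_left₀ (norm_nonneg _) hle 2

lemma sum_sum_sq_le_card_mul_specNorm_sq {a b : ℕ} (M : Matrix (Fin a) (Fin b) ℝ) :
    ∑ k, ∑ i, M i k ^ 2 ≤ b * specNorm M ^ 2 := by
  simpa using Finset.sum_le_sum fun k (_ : k ∈ Finset.univ) => sum_sq_apply_le_specNorm_sq M k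

lemma abs_trace_transpose_mul_le {a b : ℕ} (X Y : Matrix (Fin a) (Fin b) ℝ) :
    |(Yᵀ * X).trace| ≤ b * (specNorm X * specNorm Y) := by
  have htrace : (Yᵀ * X).trace = ∑ p : Fin b × Fin a, Y p.2 p.1 * X p.2 p.1 := by
    simp [Matrix.trace, Matrix.mul_apply, Fintype.sum_prod_type]
  have hfrob (M : Matrix (Fin a) (Fin b) ℝ) :
      ∑ p : Fin b × Fin a, M p.2 p.1 ^ 2 ≤ b * specNorm M ^ 2 := by
    simpa [Fintype.sum_prod_type] using sum_sum_sq_le_card_mul_specNorm_sq M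
  have hX := specNorm_nonneg X
  have hY := specNorm_nonneg Y
  refine abs_le_of_sq_le_sq ?_ (by positivity)
  calc (Yᵀ * X).trace ^ 2
      ≤ (∑ p : Fin b × Fin a, Y p.2 p.1 ^ 2) * ∑ p : Fin b × Fin a, X p.2 p.1 ^ 2 := by
        rw [htrace]
        exact Finset.sum_mul_sq_le_sq_mul_sq _ _ _
    _ ≤ (b * specNorm Y ^ 2) * (b * specNorm X ^ 2) :=
        mul_le_mul (hfrob Y) (hfrob X) (by positivity) (by positivity)
    _ = (b * (specNorm X * specNorm Y)) ^ 2 := by ring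

section TraceIdentities

variable {l m n r : Type*} [Fintype m] [Fintype n] [Fintype r]

lemma mul_mul_transpose_mul_eq {U : Matrix l m ℝ} {V : Matrix n n ℝ} (hV : Vᵀ = V)
    (E : Matrix m r ℝ) (F : Matrix n r ℝ) :
    U * (E * Fᵀ) * V = (U * E) * (V * F)ᵀ := by
  rw [transpose_mul, hV]
  simp only [Matrix.mul_assoc]

lemma trace_transpose_mul_mul_transpose (A C : Matrix m r ℝ) (B D : Matrix n r ℝ) :
    ((A * Bᵀ)ᵀ * (C * Dᵀ)).trace = ((Bᵀ * D)ᵀ * (Aᵀ * C)).trace := by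
  calc ((A * Bᵀ)ᵀ * (C * Dᵀ)).trace = (B * (Aᵀ * C * Dᵀ)).trace := by
        simp only [transpose_mul, transpose_transpose, Matrix.mul_assoc]
    _ = (Aᵀ * C * (Dᵀ * B)).trace := by
        rw [trace_mul_comm, Matrix.mul_assoc]
    _ = ((Bᵀ * D)ᵀ * (Aᵀ * C)).trace := by
        rw [trace_mul_comm, transpose_mul, transpose_transpose]

end TraceIdentities

theorem stmt_6_general {m₁ m₂ R : ℕ}
    (PU : Matrix (Fin m₁) (Fin m₁) ℝ) (PV : Matrix (Fin m₂) (Fin m₂) ℝ)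
    (hPVsymm : PVᵀ = PV)
    (Ri Rj : Matrix (Fin m₁) (Fin R) ℝ) (Si Sj : Matrix (Fin m₂) (Fin R) ℝ)
    (Ai Aj : Matrix (Fin m₁) (Fin m₂) ℝ)
    (hAi : Ai = (Real.sqrt R)⁻¹ • (Ri * Siᵀ))
    (hAj : Aj = (Real.sqrt R)⁻¹ • (Rj * Sjᵀ)) :
    |((PU * Ai * PV)ᵀ * (PU * Aj * PV)).trace| ≤
      (1 / 2) * (specNorm ((PU * Ri)ᵀ * (PU * Rj)) ^ 2 +
        specNorm ((PV * Si)ᵀ * (PV * Sj)) ^ 2) := by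
  set X := (PU * Ri)ᵀ * (PU * Rj)
  set Y := (PV * Si)ᵀ * (PV * Sj)
  have hscale : (Real.sqrt R)⁻¹ * (Real.sqrt R)⁻¹ = (R : ℝ)⁻¹ := by
    rw [← mul_inv, Real.mul_self_sqrt (Nat.cast_nonneg R)]
  have hinner : ((PU * Ai * PV)ᵀ * (PU * Aj * PV)).trace = (R : ℝ)⁻¹ * (Yᵀ * X).trace := by
    rw [hAi, hAj]
    simp only [Matrix.mul_smul, Matrix.smul_mul, transpose_smul, trace_smul, smul_eq_mul,
      ← mul_assoc, hscale]
    rw [mul_mul_transpose_mul_eq hPVsymm, mul_mul_transpose_mul_eq hPVsymm,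
      trace_transpose_mul_mul_transpose]
  calc |((PU * Ai * PV)ᵀ * (PU * Aj * PV)).trace|
      = (R : ℝ)⁻¹ * |(Yᵀ * X).trace| := by
        rw [hinner, abs_mul, abs_of_nonneg (by positivity)]
    _ ≤ (R : ℝ)⁻¹ * (R * (specNorm X * specNorm Y)) := by
        gcongr
        exact abs_trace_transpose_mul_le X Y
    _ ≤ specNorm X * specNorm Y :=
        inv_mul_left_le (mul_nonneg (specNorm_nonneg X) (specNorm_nonneg Y))
    _ ≤ (1 / 2) * (specNorm X ^ 2 + specNorm Y ^ 2) := by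
        linarith [two_mul_le_add_sq (specNorm X) (specNorm Y)]

/-- Let `P_U`, `P_V` be orthogonal projection matrices, `1 ≤ R`, and let
`R_i, R_j ∈ ℝ^{m₁×R}`, `S_i, S_j ∈ ℝ^{m₂×R}` be `R`-frames. For the masks
`A_i = R^{-1/2} R_i S_iᵀ` and `A_j = R^{-1/2} R_j S_jᵀ`,
`|⟨P_U A_i P_V, P_U A_j P_V⟩_F| ≤ (1/2) (‖(P_U R_i)ᵀ(P_U R_j)‖₂² + ‖(P_V S_i)ᵀ(P_V S_j)‖₂²)`. -/
theorem stmt_6 {m₁ m₂ R : ℕ} (hR : 1 ≤ R)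
    (PU : Matrix (Fin m₁) (Fin m₁) ℝ) (PV : Matrix (Fin m₂) (Fin m₂) ℝ)
    (hPUsymm : PUᵀ = PU) (hPUidem : PU * PU = PU)
    (hPVsymm : PVᵀ = PV) (hPVidem : PV * PV = PV)
    (Ri Rj : Matrix (Fin m₁) (Fin R) ℝ) (Si Sj : Matrix (Fin m₂) (Fin R) ℝ)
    (hRi : Riᵀ * Ri = 1) (hRj : Rjᵀ * Rj = 1)
    (hSi : Siᵀ * Si = 1) (hSj : Sjᵀ * Sj = 1)
    (Ai Aj : Matrix (Fin m₁) (Fin m₂) ℝ)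
    (hAi : Ai = (Real.sqrt R)⁻¹ • (Ri * Siᵀ))
    (hAj : Aj = (Real.sqrt R)⁻¹ • (Rj * Sjᵀ)) :
    |((PU * Ai * PV)ᵀ * (PU * Aj * PV)).trace| ≤
      (1 / 2) * (specNorm ((PU * Ri)ᵀ * (PU * Rj)) ^ 2 +
        specNorm ((PV * Si)ᵀ * (PV * Sj)) ^ 2) :=
  stmt_6_general PU PV hPVsymm Ri Rj Si Sj Ai Aj hAi hAj
end

section
/- Let U ∈ ℝ^{m₁×R} and V ∈ ℝ^{m₂×R} satisfy UᵀU = I_R and VᵀV = I_R, and set P_U = UUᵀ, P_V = VVᵀ. Let A_1, …, A_n ∈ ℝ^{m₁×m₂}, let γ² > 0, set M = R_n + γ² I where (R_n)_{i,j} = ⟨P_U A_i P_V, P_U A_j P_V⟩_F, and for A ∈ ℝ^{m₁×m₂} set r(A) = ( ⟨P_U A_i P_V, P_U A P_V⟩_F )_{i=1}^n and F(A) = ‖P_U A P_V‖_F² − r(A)ᵀ M^{-1} r(A). Let D ∈ ℝ^{n×R²} be the matrix whose i-th row is vec(Σ_i)ᵀ with Σ_i = Uᵀ A_i V, and let ν*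 ∈ ℝ^{R²} be a unit eigenvector of the symmetric positive semidefinite matrix Dᵀ M^{-1} D corresponding to its smallest eigenvalue λ_min. Define Σ* ∈ ℝ^{R×R} by vec(Σ*) = ν* and A* = U Σ* Vᵀ. Then ‖A*‖_F = 1, F(A*) = 1 − λ_min, and F(A) ≤ F(A*) for every A ∈ ℝ^{m₁×m₂} with ‖A‖_F ≤ 1. -/
/-!
Write `v(B) = vec (Uᵀ B V)`. Since `U` and `V` have orthonormal columns, the Frobenius inner
product of `P_U B P_V` and `P_U C P_V` is `v(B) ⬝ v(C)`; hence `D` has rows `v(Aᵢ)`,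
`M = D Dᵀ + γ² I`, and `F(B) = ‖v(B)‖² - v(B)ᵀ G v(B)` with `G = Dᵀ M⁻¹ D`. Completing the square
gives `G ≤ I`, so `λ_min ≤ 1`, and the Rayleigh bound `λ_min ‖x‖² ≤ xᵀ G x` gives
`F(B) ≤ (1 - λ_min) ‖v(B)‖² ≤ 1 - λ_min` as soon as `‖v(B)‖ ≤ ‖B‖_F ≤ 1`. At `A*` we have
`v(A*) = ν*`, where both bounds are equalities.
-/

open Matrix

namespace Matrix

variable {m n k l : Type*} [Fintype m] [Fintype n] [Fintype k] [Fintype l]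

theorem vec_transpose_dotProduct_vec_transpose {R : Type*} [CommRing R] (A B : Matrix m n R) :
    vec Aᵀ ⬝ᵥ vec Bᵀ = (Aᵀ * B).trace := by
  rw [vec_dotProduct_vec, transpose_transpose, trace_mul_comm, ← trace_transpose, transpose_mul,
    transpose_transpose]

theorem trace_transpose_mul_of_isometries {R : Type*} [CommRing R] [DecidableEq k] [DecidableEq l]
    {U : Matrix m k R} {V : Matrix n l R} (hU : Uᵀ * U = 1) (hV : Vᵀ * V = 1)
    (S T : Matrix k l R) :
    ((U * S * Vᵀ)ᵀ * (U * T * Vᵀ)).trace = (Sᵀ * T).trace := by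
  have h : (U * S * Vᵀ)ᵀ * (U * T * Vᵀ) = V * (Sᵀ * (Uᵀ * U) * T * Vᵀ) := by
    simp only [transpose_mul, transpose_transpose, Matrix.mul_assoc]
  rw [h, hU, Matrix.mul_one, trace_mul_comm, Matrix.mul_assoc, hV, Matrix.mul_one]

theorem transpose_mul_mul_mul_eq_of_isometries {R : Type*} [CommRing R] [DecidableEq k]
    [DecidableEq l] {U : Matrix m k R} {V : Matrix n l R} (hU : Uᵀ * U = 1) (hV : Vᵀ * V = 1)
    (S : Matrix k l R) : Uᵀ * (U * S * Vᵀ) * V = S := by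
  simp only [Matrix.mul_assoc, hV, ← Matrix.mul_assoc Uᵀ U, hU, Matrix.mul_one, Matrix.one_mul]

theorem trace_transpose_mul_self_nonneg (X : Matrix m n ℝ) : 0 ≤ (Xᵀ * X).trace := by
  simpa using (posSemidef_conjTranspose_mul_self X).trace_nonneg

theorem trace_transpose_mul_self_sub_eq [DecidableEq k] {U : Matrix m k ℝ} (hU : Uᵀ * U = 1)
    (X : Matrix m n ℝ) :
    (Xᵀ * X).trace - ((Uᵀ * X)ᵀ * (Uᵀ * X)).trace =
      ((X - U * (Uᵀ * X))ᵀ * (X - U * (Uᵀ * X))).trace := by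
  have h : (X - U * (Uᵀ * X))ᵀ * (X - U * (Uᵀ * X)) = Xᵀ * X - (Uᵀ * X)ᵀ * (Uᵀ * X) := by
    simp only [transpose_sub, transpose_mul, transpose_transpose, Matrix.sub_mul, Matrix.mul_sub,
      Matrix.mul_assoc]
    rw [← Matrix.mul_assoc Uᵀ U, hU, Matrix.one_mul]
    abel
  rw [h, trace_sub]

theorem trace_transpose_mul_le_of_isometry [DecidableEq k] {U : Matrix m k ℝ} (hU : Uᵀ * U = 1)
    (X : Matrix m n ℝ) : ((Uᵀ * X)ᵀ * (Uᵀ * X)).trace ≤ (Xᵀ * X).trace := by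
  have := trace_transpose_mul_self_sub_eq hU X
  have := trace_transpose_mul_self_nonneg (X - U * (Uᵀ * X))
  linarith

theorem trace_transpose_mul_le_of_isometries [DecidableEq k] [DecidableEq l]
    {U : Matrix m k ℝ} {V : Matrix n l ℝ} (hU : Uᵀ * U = 1) (hV : Vᵀ * V = 1)
    (X : Matrix m n ℝ) : ((Uᵀ * X * V)ᵀ * (Uᵀ * X * V)).trace ≤ (Xᵀ * X).trace :=
  calc ((Uᵀ * X * V)ᵀ * (Uᵀ * X * V)).trace
      ≤ ((X * V)ᵀ * (X * V)).trace := by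
        simpa only [Matrix.mul_assoc] using trace_transpose_mul_le_of_isometry hU (X * V)
    _ = ((Vᵀ * Xᵀ)ᵀ * (Vᵀ * Xᵀ)).trace := by
        rw [← transpose_mul, transpose_transpose, trace_mul_comm]
    _ ≤ (Xᵀᵀ * Xᵀ).trace := trace_transpose_mul_le_of_isometry hV Xᵀ
    _ = (Xᵀ * X).trace := by rw [transpose_transpose, trace_mul_comm]

theorem trace_projection_sandwich_eq_dotProduct {R : Type*} [CommRing R] [DecidableEq k]
    [DecidableEq l] {U : Matrix m k R} {V : Matrix n l R} (hU : Uᵀ * U = 1) (hV : Vᵀ * V = 1)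
    (B C : Matrix m n R) :
    ((U * Uᵀ * B * (V * Vᵀ))ᵀ * (U * Uᵀ * C * (V * Vᵀ))).trace =
      vec (Uᵀ * B * V)ᵀ ⬝ᵥ vec (Uᵀ * C * V)ᵀ := by
  have hsandwich : ∀ X : Matrix m n R, U * Uᵀ * X * (V * Vᵀ) = U * (Uᵀ * X * V) * Vᵀ :=
    fun X => by simp only [Matrix.mul_assoc]
  rw [hsandwich, hsandwich, trace_transpose_mul_of_isometries hU hV,
    vec_transpose_dotProduct_vec_transpose]

section RegularizedGram

variable [DecidableEq n]

theorem posDef_mul_transpose_add_smul_one (D : Matrix n k ℝ) {γ : ℝ} (hγ : 0 < γ) :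
    (D * Dᵀ + γ • 1).PosDef := by
  refine PosDef.posSemidef_add ?_ ?_
  · simpa using posSemidef_self_mul_conjTranspose D
  · rw [smul_one_eq_diagonal]
    exact posDef_diagonal_iff.mpr fun _ => hγ

theorem dotProduct_mulVec_transpose_mul_inv_mul_le (D : Matrix n k ℝ) {γ : ℝ} (hγ : 0 < γ)
    (x : k → ℝ) : x ⬝ᵥ (Dᵀ * (D * Dᵀ + γ • 1)⁻¹ * D) *ᵥ x ≤ x ⬝ᵥ x := by
  set M := D * Dᵀ + γ • 1
  set w := M⁻¹ *ᵥ D *ᵥ x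
  have hMw : M *ᵥ w = D *ᵥ x := by
    rw [mulVec_mulVec, mul_nonsing_inv _ ((isUnit_iff_isUnit_det M).mp
      (posDef_mul_transpose_add_smul_one D hγ).isUnit), one_mulVec]
  have hquad : x ⬝ᵥ (Dᵀ * M⁻¹ * D) *ᵥ x = D *ᵥ x ⬝ᵥ w := by
    rw [← mulVec_mulVec, ← mulVec_mulVec, dotProduct_mulVec, vecMul_transpose]
  have hDTw : Dᵀ *ᵥ w ⬝ᵥ Dᵀ *ᵥ w = D *ᵥ x ⬝ᵥ w - γ * (w ⬝ᵥ w) := by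
    rw [dotProduct_mulVec, vecMul_transpose, mulVec_mulVec, ← hMw, add_mulVec, smul_mulVec,
      one_mulVec, add_dotProduct, smul_dotProduct, smul_eq_mul]
    ring
  have hcross : x ⬝ᵥ Dᵀ *ᵥ w = D *ᵥ x ⬝ᵥ w := by
    rw [dotProduct_mulVec, vecMul_transpose]
  have hsq : x ⬝ᵥ x - x ⬝ᵥ (Dᵀ * M⁻¹ * D) *ᵥ x =
      (x - Dᵀ *ᵥ w) ⬝ᵥ (x - Dᵀ *ᵥ w) + γ * (w ⬝ᵥ w) := by
    rw [hquad, sub_dotProduct, dotProduct_sub, dotProduct_sub, hDTw, hcross,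
      dotProduct_comm (Dᵀ *ᵥ w), hcross]
    ring
  have h₁ : 0 ≤ (x - Dᵀ *ᵥ w) ⬝ᵥ (x - Dᵀ *ᵥ w) := by
    simpa using dotProduct_self_star_nonneg (x - Dᵀ *ᵥ w)
  have h₂ : 0 ≤ γ * (w ⬝ᵥ w) := mul_nonneg hγ.le (by simpa using dotProduct_self_star_nonneg w)
  linarith

theorem IsHermitian.mul_dotProduct_self_le {G : Matrix n n ℝ} (hG : G.IsHermitian) {c : ℝ}
    (hc : ∀ (μ : ℝ) (w : n → ℝ), w ≠ 0 → G *ᵥ w = μ • w → c ≤ μ) (x : n → ℝ) :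
    c * (x ⬝ᵥ x) ≤ x ⬝ᵥ G *ᵥ x := by
  have hH : (G - c • 1).IsHermitian := hG.sub (by simp [IsHermitian])
  have hpsd : (G - c • 1).PosSemidef := by
    refine hH.posSemidef_iff_eigenvalues_nonneg.mpr fun i => ?_
    have hb := hH.mulVec_eigenvectorBasis i
    rw [sub_mulVec, smul_mulVec, one_mulVec, sub_eq_iff_eq_add, ← add_smul] at hb
    simpa using
      hc _ _ ((WithLp.ofLp_eq_zero 2).ne.2 (hH.eigenvectorBasis.orthonormal.ne_zero i)) hb
  have := hpsd.dotProduct_mulVec_nonneg x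
  simpa [sub_mulVec, dotProduct_sub, smul_mulVec, dotProduct_smul] using this

theorem IsHermitian.dotProduct_self_sub_dotProduct_mulVec_le {G : Matrix n n ℝ}
    (hG : G.IsHermitian) {c : ℝ} (hc : ∀ (μ : ℝ) (w : n → ℝ), w ≠ 0 → G *ᵥ w = μ • w → c ≤ μ)
    (hc₁ : c ≤ 1) {x : n → ℝ} (hx : x ⬝ᵥ x ≤ 1) : x ⬝ᵥ x - x ⬝ᵥ G *ᵥ x ≤ 1 - c := by
  nlinarith [hG.mul_dotProduct_self_le hc x]

end RegularizedGram

end Matrix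

/-- (Sequential mask construction, Theorem on the optimal sequential mask.)
Let `U ∈ ℝ^{m₁×R}`, `V ∈ ℝ^{m₂×R}` have orthonormal columns, `P_U = UUᵀ`, `P_V = VVᵀ`.
Let `M = R_n + γ² I` with `(R_n)_{i,j} = ⟨P_U A_i P_V, P_U A_j P_V⟩_F`, and for a mask `B`
let `r(B)_i = ⟨P_U A_i P_V, P_U B P_V⟩_F` and
`F(B) = ‖P_U B P_V‖_F² − r(B)ᵀ M⁻¹ r(B)`. Let `D ∈ ℝ^{n×R²}` have `i`-th row
`vec(Σ_i)ᵀ` with `Σ_i = Uᵀ A_i V`, and let `ν*` be a unit eigenvector of `Dᵀ M⁻¹ D`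
for its smallest eigenvalue `λ_min`. With `vec(Σ*) = ν*` and `A* = U Σ* Vᵀ`:
`‖A*‖_F = 1`, `F(A*) = 1 − λ_min`, and `F(B) ≤ F(A*)` for every `B` with `‖B‖_F ≤ 1`. -/
theorem stmt_14 {m₁ m₂ R n : ℕ}
    (U : Matrix (Fin m₁) (Fin R) ℝ) (V : Matrix (Fin m₂) (Fin R) ℝ)
    (hU : Uᵀ * U = 1) (hV : Vᵀ * V = 1)
    (A : Fin n → Matrix (Fin m₁) (Fin m₂) ℝ)
    (γ2 : ℝ) (hγ2 : 0 < γ2)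
    (M : Matrix (Fin n) (Fin n) ℝ)
    (hM : M = Matrix.of (fun i j =>
        (((U * Uᵀ) * A i * (V * Vᵀ))ᵀ * ((U * Uᵀ) * A j * (V * Vᵀ))).trace) +
      γ2 • (1 : Matrix (Fin n) (Fin n) ℝ))
    (r : Matrix (Fin m₁) (Fin m₂) ℝ → Fin n → ℝ)
    (hr : ∀ B i, r B i =
      (((U * Uᵀ) * A i * (V * Vᵀ))ᵀ * ((U * Uᵀ) * B * (V * Vᵀ))).trace)
    (F : Matrix (Fin m₁) (Fin m₂) ℝ → ℝ)
    (hF : ∀ B, F B =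
      (((U * Uᵀ) * B * (V * Vᵀ))ᵀ * ((U * Uᵀ) * B * (V * Vᵀ))).trace -
        r B ⬝ᵥ M⁻¹.mulVec (r B))
    (D : Matrix (Fin n) (Fin R × Fin R) ℝ)
    (hD : ∀ i kl, D i kl = (Uᵀ * A i * V) kl.1 kl.2)
    (ν : Fin R × Fin R → ℝ) (hν : ν ⬝ᵥ ν = 1)
    (lammin : ℝ)
    (heig : (Dᵀ * M⁻¹ * D).mulVec ν = lammin • ν)
    (hmin : ∀ (μ : ℝ) (w : Fin R × Fin R → ℝ), w ≠ 0 →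
      (Dᵀ * M⁻¹ * D).mulVec w = μ • w → lammin ≤ μ)
    (Sstar : Matrix (Fin R) (Fin R) ℝ) (hS : ∀ k l, Sstar k l = ν (k, l)) :
    Real.sqrt (((U * Sstar * Vᵀ)ᵀ * (U * Sstar * Vᵀ)).trace) = 1 ∧
    F (U * Sstar * Vᵀ) = 1 - lammin ∧
    (∀ B : Matrix (Fin m₁) (Fin m₂) ℝ,
      Real.sqrt ((Bᵀ * B).trace) ≤ 1 → F B ≤ F (U * Sstar * Vᵀ)) := by
  -- Mathlib's `vec` stacks columns, so `vec Σᵀ` is the row-major vectorization `(k, l) ↦ Σ k l`.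
  set v : Matrix (Fin m₁) (Fin m₂) ℝ → Fin R × Fin R → ℝ := fun B => vec (Uᵀ * B * V)ᵀ
  have hinner : ∀ B C, ((U * Uᵀ * B * (V * Vᵀ))ᵀ * (U * Uᵀ * C * (V * Vᵀ))).trace = v B ⬝ᵥ v C :=
    trace_projection_sandwich_eq_dotProduct hU hV
  have hDrow : ∀ i, D i = v (A i) := fun i => funext (hD i)
  obtain rfl : M = D * Dᵀ + γ2 • 1 := by
    rw [hM, add_left_inj]
    ext i j
    rw [of_apply, hinner, ← hDrow, ← hDrow]
    rfl
  have hF' : ∀ B, F B = v B ⬝ᵥ v B - v B ⬝ᵥ (Dᵀ * (D * Dᵀ + γ2 • 1)⁻¹ * D) *ᵥ v B := by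
    intro B
    have hrB : r B = D *ᵥ v B := funext fun i => by rw [hr, hinner, ← hDrow]; rfl
    rw [hF, hinner, hrB, ← mulVec_mulVec, ← mulVec_mulVec, dotProduct_mulVec (v B),
      vecMul_transpose]
  have hSν : vec Sstarᵀ = ν := funext fun kl => hS kl.1 kl.2
  have hvS : v (U * Sstar * Vᵀ) = ν := by
    simp only [v, transpose_mul_mul_mul_eq_of_isometries hU hV, hSν]
  have hG : (Dᵀ * (D * Dᵀ + γ2 • 1)⁻¹ * D).IsHermitian := by
    simpa using isHermitian_conjTranspose_mul_mul D
      (posDef_mul_transpose_add_smul_one D hγ2).isHermitian.inv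
  have hGν : ν ⬝ᵥ (Dᵀ * (D * Dᵀ + γ2 • 1)⁻¹ * D) *ᵥ ν = lammin := by
    rw [heig, dotProduct_smul, hν, smul_eq_mul, mul_one]
  have hFS : F (U * Sstar * Vᵀ) = 1 - lammin := by rw [hF', hvS, hν, hGν]
  refine ⟨?_, hFS, fun B hB => ?_⟩
  · rw [trace_transpose_mul_of_isometries hU hV, ← vec_transpose_dotProduct_vec_transpose, hSν, hν,
      Real.sqrt_one]
  · have hlam : lammin ≤ 1 := by
      simpa [hGν, hν] using dotProduct_mulVec_transpose_mul_inv_mul_le D hγ2 ν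
    have hvB : v B ⬝ᵥ v B ≤ 1 := by
      rw [vec_transpose_dotProduct_vec_transpose]
      exact (trace_transpose_mul_le_of_isometries hU hV B).trans (Real.sqrt_le_one.mp hB)
    rw [hF', hFS]
    exact hG.dotProduct_self_sub_dotProduct_mulVec_le hmin hlam hvB
end
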